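/- arXiv:1711.05576 — 4 statements merged into one kernel-verified Lean document; each statement's English description precedes it below -/
import Mathlib

section
/- Fix an adiabatic constant γ > 1 and constants μ, η, κ, R > 0. Let (ρ, v, p, B, ψ) be a GLM-MHD state with ρ > 0 and p > 0, with entropy variables w (so w₅ = −2β < 0). Consider the map L : (ℝ⁹)³ → (ℝ⁹)³ sending a triple g = (g¹, g², g³) of putative spatial gradients (∂ₓw, ∂_yw, ∂_zw) of the entropy variables to the viscous flux (f₁ᵛ, f₂ᵛ, f₃ᵛ), where the primitive-variable gradients occurring in fᵛ are expressed through g via ∇v_k = −(1/w₅)∇w_{1+k} + (w_{1+k}/w₅²)∇w₅ for k = 1,2,3, ∇B_k = −(1/w₅)∇w_{5+k} + (w_{5+k}/w₅²)∇w₅ for k = 1,2,3, and ∇(p/ρ) = (1/w₅²)∇w₅. Then L is linear in g, and its representing block matrix K ∈ ℝ^{27×27} (acting on g viewed as a vector of ℝ²⁷) is symmetric and positive semi-definite: qᵀKq ≥ 0 for every q ∈ ℝ²⁷. -/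
/-!
With `c = p/ρ = −1/w₅ > 0`, the gradients of velocity, magnetic field and `p/ρ` are
`c (∂w_{1+k} + v_k ∂w₅)`, `c (∂w_{5+k} + B_k ∂w₅)` and `c² ∂w₅`. Pairing the flux of `g` with
a second gradient triple `h` therefore gives
`c ⟨∇ᵥh, τ(∇ᵥg)⟩ + c η ⟨∇_B h, ∇_B g − (∇_B g)ᵀ⟩ + (κ/R) c² ⟨∂w₅ h, ∂w₅ g⟩`,
a symmetric bilinear form which is nonnegative on the diagonal because
`⟨A, τ(A)⟩ = μ/2 ‖A + Aᵀ − (2/3) tr A · I‖²` and `⟨b, b − bᵀ⟩ = ½ ‖b − bᵀ‖²`.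
Any matrix `K` representing the flux is the matrix of this form.
-/

open Matrix

/-- The entropy variables `w` of a GLM-MHD state `(ρ, v, p, B, ψ)`:
`w = ((γ−s)/(γ−1) − β‖v‖², 2βv, −2β, 2βB, 2βψ)` with `β = ρ/(2p)` and
`s = log (p ρ^(−γ))`. -/
noncomputable def entropyVars (γ ρ p ψ : ℝ) (v B : Fin 3 → ℝ) : Fin 9 → ℝ :=
  let β : ℝ := ρ / (2 * p)
  let s : ℝ := Real.log (p * ρ ^ (-γ))
  ![(γ - s) / (γ - 1) - β * ∑ k, (v k) ^ 2,
    2 * β * v 0, 2 * β * v 1, 2 * β * v 2,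
    -(2 * β),
    2 * β * B 0, 2 * β * B 1, 2 * β * B 2,
    2 * β * ψ]

/-- The viscous flux `fᵛ = (f₁ᵛ, f₂ᵛ, f₃ᵛ)` of the resistive GLM-MHD equations,
expressed as a function of a putative triple `g = (∂ₓw, ∂_yw, ∂_zw)` of spatial
gradients of the entropy variables: the primitive-variable gradients are rewritten via
`∇v_k = −(1/w₅)∇w_{1+k} + (w_{1+k}/w₅²)∇w₅`,
`∇B_k = −(1/w₅)∇w_{5+k} + (w_{5+k}/w₅²)∇w₅` and `∇(p/ρ) = (1/w₅²)∇w₅`.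
Components: mass `0`; momentum the viscous stress tensor
`τ = μ(∇v + (∇v)ᵀ) − (2/3)μ(∇·v)I`; energy `τv + (κ/R)∇(p/ρ) − η((∇×B)×B)`;
magnetic field `η((∇B)ᵀ − ∇B)`; GLM component `0`. -/
noncomputable def viscFluxOfGrad (γ μ η κ R ρ p ψ : ℝ) (v B : Fin 3 → ℝ)
    (g : Fin 3 → Fin 9 → ℝ) : Fin 3 → Fin 9 → ℝ :=
  let w := entropyVars γ ρ p ψ v B
  let gv : Fin 3 → Fin 3 → ℝ := fun k d =>
    -(1 / w 4) * (![g d 1, g d 2, g d 3] k) + ((![w 1, w 2, w 3] k) / (w 4) ^ 2) * g d 4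
  let gB : Fin 3 → Fin 3 → ℝ := fun k d =>
    -(1 / w 4) * (![g d 5, g d 6, g d 7] k) + ((![w 5, w 6, w 7] k) / (w 4) ^ 2) * g d 4
  let gT : Fin 3 → ℝ := fun d => (1 / (w 4) ^ 2) * g d 4
  let τ : Fin 3 → Fin 3 → ℝ := fun i j =>
    μ * (gv i j + gv j i) - (2 / 3) * μ * (∑ k, gv k k) * (if i = j then (1 : ℝ) else 0)
  fun d =>
    ![0,
      τ 0 d, τ 1 d, τ 2 d,
      (∑ i, τ i d * v i) + (κ / R) * gT d + η * ∑ k, B k * (gB k d - gB d k),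
      η * (gB 0 d - gB d 0), η * (gB 1 d - gB d 1), η * (gB 2 d - gB d 2),
      0]

theorem Matrix.transpose_eq_self_of_dotProduct_mulVec_comm {ι R : Type*} [Fintype ι]
    [DecidableEq ι] [CommSemiring R] {K : Matrix ι ι R}
    (h : ∀ x y : ι → R, x ⬝ᵥ K *ᵥ y = y ⬝ᵥ K *ᵥ x) : Kᵀ = K := by
  ext i j
  simpa using h (Pi.single j 1) (Pi.single i 1)

section ViscousStress

variable {n : Type*} [Fintype n] [DecidableEq n]

noncomputable def viscousStress (μ : ℝ) : Matrix n n ℝ →ₗ[ℝ] Matrix n n ℝ where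
  toFun A := μ • (A + Aᵀ) - (2 / 3 * μ * A.trace) • 1
  map_add' A A' := by
    simp only [transpose_add, trace_add]
    module
  map_smul' c A := by
    simp only [transpose_smul, trace_smul, smul_eq_mul, RingHom.id_apply]
    module

theorem viscousStress_apply (μ : ℝ) (A : Matrix n n ℝ) (i j : n) :
    viscousStress μ A i j = μ * (A i j + A j i) - 2 / 3 * μ * A.trace * (1 : Matrix n n ℝ) i j :=
  rfl

theorem sum_mul_viscousStress (μ : ℝ) (A A' : Matrix n n ℝ) :
    ∑ i, ∑ j, A i j * viscousStress μ A' i j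
      = μ * (∑ i, ∑ j, A i j * A' i j + ∑ i, ∑ j, A i j * A' j i)
        - 2 / 3 * μ * A.trace * A'.trace := by
  simp only [viscousStress_apply, mul_sub, mul_add, Finset.sum_sub_distrib, Finset.sum_add_distrib,
    mul_left_comm _ μ, ← Finset.mul_sum]
  simp only [one_apply, mul_ite, mul_one, mul_zero, Finset.sum_ite_eq, Finset.mem_univ, if_true]
  rw [← Finset.sum_mul]
  change _ - A.trace * _ = _
  ring

theorem sum_mul_viscousStress_comm (μ : ℝ) (A A' : Matrix n n ℝ) :
    ∑ i, ∑ j, A i j * viscousStress μ A' i j = ∑ i, ∑ j, A' i j * viscousStress μ A i j := by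
  rw [sum_mul_viscousStress, sum_mul_viscousStress,
    Finset.sum_comm (f := fun i j => A i j * A' j i)]
  simp only [mul_comm (A _ _)]
  ring

theorem sum_mul_viscousStress_self (μ : ℝ) (A : Matrix (Fin 3) (Fin 3) ℝ) :
    ∑ i, ∑ j, A i j * viscousStress μ A i j
      = μ / 2 * ∑ i, ∑ j,
          (A i j + A j i - 2 / 3 * A.trace * (1 : Matrix (Fin 3) (Fin 3) ℝ) i j) ^ 2 := by
  rw [sum_mul_viscousStress]
  simp only [Fin.sum_univ_three, Fin.isValue, trace, diag_apply, one_apply, mul_ite, mul_one,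
    mul_zero, ↓reduceIte, zero_ne_one, sub_zero, Fin.reduceEq, one_ne_zero]
  ring

theorem sum_mul_viscousStress_self_nonneg {μ : ℝ} (hμ : 0 ≤ μ) (A : Matrix (Fin 3) (Fin 3) ℝ) :
    0 ≤ ∑ i, ∑ j, A i j * viscousStress μ A i j := by
  rw [sum_mul_viscousStress_self]
  positivity

end ViscousStress

section SkewPart

variable {n : Type*} [Fintype n]

theorem sum_mul_sub_transpose_comm (b b' : Matrix n n ℝ) :
    ∑ i, ∑ j, b i j * (b' i j - b' j i) = ∑ i, ∑ j, b' i j * (b i j - b j i) := by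
  simp only [mul_sub, Finset.sum_sub_distrib]
  rw [Finset.sum_comm (f := fun i j => b i j * b' j i)]
  simp only [mul_comm (b _ _)]

theorem sum_mul_sub_transpose_self (b : Matrix n n ℝ) :
    ∑ i, ∑ j, b i j * (b i j - b j i) = (∑ i, ∑ j, (b i j - b j i) ^ 2) / 2 := by
  have hswap : ∑ i, ∑ j, b i j * (b i j - b j i) = ∑ i, ∑ j, b j i * (b j i - b i j) :=
    Finset.sum_comm
  rw [eq_div_iff two_ne_zero, mul_two]
  nth_rw 2 [hswap]
  simp only [← Finset.sum_add_distrib]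
  congr! 2 with i _ j _
  ring

end SkewPart

/-- For `c = p/ρ`, the gradient of a primitive field `u` (velocity or magnetic field) whose
entropy variables `2βu` sit at the positions `e` is `c • primGrad e u g`; rows are components of
`u`, columns are directions. -/
noncomputable def primGrad (e : Fin 3 → Fin 9) (u : Fin 3 → ℝ) :
    (Fin 3 → Fin 9 → ℝ) →ₗ[ℝ] Matrix (Fin 3) (Fin 3) ℝ where
  toFun g := of fun k d => g d (e k) + u k * g d 4
  map_add' g h := by
    ext k d
    simp only [of_apply, Pi.add_apply, Matrix.add_apply]
    ring
  map_smul' c g := by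
    ext k d
    simp only [of_apply, Pi.smul_apply, Matrix.smul_apply, smul_eq_mul, RingHom.id_apply]
    ring

section PrimitiveFlux

variable (μ η κR : ℝ) (v B : Fin 3 → ℝ)

noncomputable def viscFluxOfPrimGrad (gv gB : Matrix (Fin 3) (Fin 3) ℝ) (gT : Fin 3 → ℝ) :
    Fin 3 → Fin 9 → ℝ :=
  let τ := viscousStress μ gv
  fun d =>
    ![0,
      τ 0 d, τ 1 d, τ 2 d,
      (∑ i, τ i d * v i) + κR * gT d + η * ∑ k, B k * (gB k d - gB d k),
      η * (gB 0 d - gB d 0), η * (gB 1 d - gB d 1), η * (gB 2 d - gB d 2),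
      0]

theorem viscFluxOfPrimGrad_add (gv gB gv' gB' : Matrix (Fin 3) (Fin 3) ℝ) (gT gT' : Fin 3 → ℝ) :
    viscFluxOfPrimGrad μ η κR v B (gv + gv') (gB + gB') (gT + gT')
      = viscFluxOfPrimGrad μ η κR v B gv gB gT + viscFluxOfPrimGrad μ η κR v B gv' gB' gT' := by
  ext d a
  fin_cases a <;> simp [viscFluxOfPrimGrad, Fin.sum_univ_three] <;> ring

theorem viscFluxOfPrimGrad_smul (gv gB : Matrix (Fin 3) (Fin 3) ℝ) (gT : Fin 3 → ℝ) (c : ℝ) :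
    viscFluxOfPrimGrad μ η κR v B (c • gv) (c • gB) (c • gT)
      = c • viscFluxOfPrimGrad μ η κR v B gv gB gT := by
  ext d a
  fin_cases a <;> simp [viscFluxOfPrimGrad, Fin.sum_univ_three] <;> ring

theorem sum_mul_viscFluxOfPrimGrad (gv gB : Matrix (Fin 3) (Fin 3) ℝ) (gT : Fin 3 → ℝ)
    (h : Fin 3 → Fin 9 → ℝ) :
    ∑ d, ∑ a, h d a * viscFluxOfPrimGrad μ η κR v B gv gB gT d a
      = ∑ i, ∑ j, primGrad ![1, 2, 3] v h i j * viscousStress μ gv i j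
        + η * ∑ i, ∑ j, primGrad ![5, 6, 7] B h i j * (gB i j - gB j i)
        + κR * ∑ d, h d 4 * gT d := by
  simp only [viscFluxOfPrimGrad, Fin.isValue, Fin.sum_univ_succ, Fin.succ_zero_eq_one,
    Finset.univ_unique, Fin.default_eq_zero, Finset.sum_singleton, Fin.succ_one_eq_two,
    cons_val_zero, mul_zero, cons_val_succ, Fin.reduceSucc, cons_val_fin_one, Finset.sum_const_zero,
    add_zero, zero_add, sub_self, primGrad, LinearMap.coe_mk, AddHom.coe_mk, of_apply]
  ring

end PrimitiveFlux

theorem viscFluxOfGrad_eq (γ μ η κ R ρ p ψ : ℝ) (v B : Fin 3 → ℝ) (hρ : ρ ≠ 0) (hp : p ≠ 0)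
    (g : Fin 3 → Fin 9 → ℝ) :
    viscFluxOfGrad γ μ η κ R ρ p ψ v B g
      = viscFluxOfPrimGrad μ η (κ / R) v B ((p / ρ) • primGrad ![1, 2, 3] v g)
          ((p / ρ) • primGrad ![5, 6, 7] B g) ((p / ρ) ^ 2 • fun d => g d 4) := by
  set w := entropyVars γ ρ p ψ v B with hw
  have hw4 : w 4 = -(ρ / p) := by simp only [hw, entropyVars, Fin.isValue, cons_val, neg_inj]; ring
  have hgv : (of fun k d => -(1 / w 4) * ![g d 1, g d 2, g d 3] k
      + ![w 1, w 2, w 3] k / w 4 ^ 2 * g d 4) = (p / ρ) • primGrad ![1, 2, 3] v g := by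
    ext k d
    fin_cases k <;> simp [hw, entropyVars, primGrad] <;> field_simp
  have hgB : (of fun k d => -(1 / w 4) * ![g d 5, g d 6, g d 7] k
      + ![w 5, w 6, w 7] k / w 4 ^ 2 * g d 4) = (p / ρ) • primGrad ![5, 6, 7] B g := by
    ext k d
    fin_cases k <;> simp [hw, entropyVars, primGrad] <;> field_simp
  have hgT : (fun d => 1 / w 4 ^ 2 * g d 4) = (p / ρ) ^ 2 • fun d => g d 4 := by
    ext d
    rw [hw4, Pi.smul_apply, smul_eq_mul, neg_sq, div_pow, div_pow, one_div_div]
  rw [← hgv, ← hgB, ← hgT]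
  unfold viscFluxOfGrad viscFluxOfPrimGrad
  rfl

theorem isLinearMap_viscFluxOfGrad (γ μ η κ R ρ p ψ : ℝ) (v B : Fin 3 → ℝ) (hρ : ρ ≠ 0)
    (hp : p ≠ 0) : IsLinearMap ℝ (viscFluxOfGrad γ μ η κ R ρ p ψ v B) := by
  have hF := viscFluxOfGrad_eq γ μ η κ R ρ p ψ v B hρ hp
  refine ⟨fun g g' => ?_, fun c g => ?_⟩
  · have hT : (fun d => (g + g') d 4) = (fun d => g d 4) + fun d => g' d 4 := rfl
    rw [hF, hF, hF, map_add, map_add, hT, smul_add, smul_add, smul_add, viscFluxOfPrimGrad_add]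
  · have hT : (fun d => (c • g) d 4) = c • fun d => g d 4 := rfl
    rw [hF, hF, map_smul, map_smul, hT, smul_comm _ c, smul_comm _ c, smul_comm _ c,
      viscFluxOfPrimGrad_smul]

noncomputable def viscousForm (μ η κR c : ℝ) (v B : Fin 3 → ℝ) (h g : Fin 3 → Fin 9 → ℝ) : ℝ :=
  c * ∑ i, ∑ j, primGrad ![1, 2, 3] v h i j * viscousStress μ (primGrad ![1, 2, 3] v g) i j
    + c * η * ∑ i, ∑ j, primGrad ![5, 6, 7] B h i j
        * (primGrad ![5, 6, 7] B g i j - primGrad ![5, 6, 7] B g j i)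
    + κR * c ^ 2 * ∑ d, h d 4 * g d 4

theorem viscousForm_comm (μ η κR c : ℝ) (v B : Fin 3 → ℝ) (h g : Fin 3 → Fin 9 → ℝ) :
    viscousForm μ η κR c v B h g = viscousForm μ η κR c v B g h := by
  simp only [viscousForm, mul_comm (h _ _)]
  rw [sum_mul_viscousStress_comm, sum_mul_sub_transpose_comm]

theorem viscousForm_self_nonneg {μ η κR c : ℝ} (hμ : 0 ≤ μ) (hη : 0 ≤ η) (hκR : 0 ≤ κR)
    (hc : 0 ≤ c) (v B : Fin 3 → ℝ) (g : Fin 3 → Fin 9 → ℝ) : 0 ≤ viscousForm μ η κR c v B g g := by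
  have hstress := sum_mul_viscousStress_self_nonneg hμ (primGrad ![1, 2, 3] v g)
  unfold viscousForm
  rw [sum_mul_sub_transpose_self]
  simp only [← sq]
  positivity

theorem sum_mul_viscFluxOfGrad (γ μ η κ R ρ p ψ : ℝ) (v B : Fin 3 → ℝ) (hρ : ρ ≠ 0) (hp : p ≠ 0)
    (h g : Fin 3 → Fin 9 → ℝ) :
    ∑ d, ∑ a, h d a * viscFluxOfGrad γ μ η κ R ρ p ψ v B g d a
      = viscousForm μ η (κ / R) (p / ρ) v B h g := by
  rw [viscFluxOfGrad_eq γ μ η κ R ρ p ψ v B hρ hp, sum_mul_viscFluxOfPrimGrad, map_smul]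
  simp only [viscousForm, Matrix.smul_apply, Pi.smul_apply, smul_eq_mul, ← mul_sub,
    mul_left_comm _ (p / ρ), mul_left_comm _ ((p / ρ) ^ 2), ← Finset.mul_sum]
  ring

theorem viscous_flux_matrix_symm_posSemidef_general
    (γ μ η κ R : ℝ) (hμ : 0 < μ) (hη : 0 < η) (hκ : 0 < κ) (hR : 0 < R)
    (ρ p ψ : ℝ) (v B : Fin 3 → ℝ) (hρ : 0 < ρ) (hp : 0 < p) :
    IsLinearMap ℝ (viscFluxOfGrad γ μ η κ R ρ p ψ v B) ∧
    ∀ K : Matrix (Fin 3 × Fin 9) (Fin 3 × Fin 9) ℝ,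
      (∀ (g : Fin 3 → Fin 9 → ℝ) (d : Fin 3) (a : Fin 9),
        viscFluxOfGrad γ μ η κ R ρ p ψ v B g d a
          = ∑ q : Fin 3 × Fin 9, K (d, a) q * g q.1 q.2) →
      Kᵀ = K ∧ ∀ q : (Fin 3 × Fin 9) → ℝ, 0 ≤ ∑ x, ∑ y, q x * K x y * q y := by
  have hpair := sum_mul_viscFluxOfGrad γ μ η κ R ρ p ψ v B hρ.ne' hp.ne'
  refine ⟨isLinearMap_viscFluxOfGrad γ μ η κ R ρ p ψ v B hρ.ne' hp.ne', fun K hK => ?_⟩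
  have hKform : ∀ x y, x ⬝ᵥ K *ᵥ y
      = viscousForm μ η (κ / R) (p / ρ) v B (Function.curry x) (Function.curry y) := by
    intro x y
    simp only [← hpair, hK, dotProduct, mulVec, Fintype.sum_prod_type, Function.curry]
  refine ⟨transpose_eq_self_of_dotProduct_mulVec_comm fun x y => ?_, fun q => ?_⟩
  · rw [hKform, hKform, viscousForm_comm]
  · calc 0 ≤ viscousForm μ η (κ / R) (p / ρ) v B (Function.curry q) (Function.curry q) :=
          viscousForm_self_nonneg hμ.le hη.le (by positivity) (by positivity) v B _
      _ = ∑ x, ∑ y, q x * K x y * q y := by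
          rw [← hKform]
          simp only [dotProduct, mulVec, Finset.mul_sum, mul_assoc]

/-- **Lemma 2.1.**  For any admissible GLM-MHD state, the map sending a triple of
putative entropy-variable gradients to the viscous flux is linear, and any matrix
`K ∈ ℝ^{27×27}` representing it (acting on the gradients viewed as a vector of ℝ²⁷)
is symmetric and positive semi-definite. -/
theorem viscous_flux_matrix_symm_posSemidef
    (γ μ η κ R : ℝ) (hγ : 1 < γ) (hμ : 0 < μ) (hη : 0 < η) (hκ : 0 < κ) (hR : 0 < R)
    (ρ p ψ : ℝ) (v B : Fin 3 → ℝ) (hρ : 0 < ρ) (hp : 0 < p) :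
    IsLinearMap ℝ (viscFluxOfGrad γ μ η κ R ρ p ψ v B) ∧
    ∀ K : Matrix (Fin 3 × Fin 9) (Fin 3 × Fin 9) ℝ,
      (∀ (g : Fin 3 → Fin 9 → ℝ) (d : Fin 3) (a : Fin 9),
        viscFluxOfGrad γ μ η κ R ρ p ψ v B g d a
          = ∑ q : Fin 3 × Fin 9, K (d, a) q * g q.1 q.2) →
      Kᵀ = K ∧ ∀ q : (Fin 3 × Fin 9) → ℝ, 0 ≤ ∑ x, ∑ y, q x * K x y * q y :=
  viscous_flux_matrix_symm_posSemidef_general γ μ η κ R hμ hη hκ hR ρ p ψ v B hρ hp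
end

section
/- (Entropy contribution of GLM volume terms, Lemma 4.1, abstract two-dimensional form.) Let 𝒮 be a set of states, n ≥ 1, W : 𝒮 → ℝⁿ, Ψ₁, Ψ₂ : 𝒮 → ℝ, and for d = 1, 2 let F_d : 𝒮 × 𝒮 → ℝⁿ be symmetric two-point fluxes (F_d(U, V) = F_d(V, U)) satisfying, for all U, V ∈ 𝒮, the entropy-conservation condition (W(U) − W(V))ᵀ F_d(U, V) = Ψ_d(U) − Ψ_d(V) and the diagonal contraction property W(U)ᵀ F_d(U, U) = Ψ_d(U). Then for any SBP operator (ω, D, Q) and any nodal states U_{ij} ∈ 𝒮 (0 ≤ i, j ≤ N), the contracted split-form volume term vanishes: Σ_{i,j=0}^{N} ω_i ω_j W(U_{ij})ᵀ [ 2 Σ_{m=0}^{N} D_{im} F₁(U_{ij}, U_{mj}) + 2 Σ_{m=0}^{N} D_{jm} F₂(U_{ij}, U_{im}) ] = 0. -/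
/-!
Multiplying by the weights turns the volume term into a sum, over the grid lines of each
direction, of `∑ i m, Q i m * (W Uᵢ ⬝ᵥ F(Uᵢ, Uₘ))` with `Q = diag ω * D`. Averaging this sum with
its transpose, `Q + Qᵀ = B` picks out the diagonal, where the contraction gives `∑ B i Ψ(Uᵢ)`,
while entropy conservation turns the antisymmetric remainder into potential differences whose
sum is, through the row and column sums of `Q`, the same boundary term `∑ B i Ψ(Uᵢ)`.
-/

open Matrix

section SBP

variable {ι R : Type*} [Fintype ι] [DecidableEq ι] [CommRing R]

lemma Matrix.sum_col_eq_of_add_transpose_eq_diagonal {Q : Matrix ι ι R} {B : ι → R}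
    (hQ : Q + Qᵀ = diagonal B) (hrow : ∀ i, ∑ m, Q i m = 0) (m : ι) :
    ∑ i, Q i m = B m := by
  have h : ∀ i, Q i m = diagonal B i m - Q m i := fun i => by
    rw [← hQ, add_apply, transpose_apply, add_sub_cancel_right]
  simp only [h, Finset.sum_sub_distrib, diagonal_apply, Finset.sum_ite_eq', Finset.mem_univ,
    if_true, hrow, sub_zero]

lemma Matrix.sum_mul_eq_zero_of_sbp [NoZeroDivisors R] [CharZero R]
    {Q : Matrix ι ι R} {B : ι → R}
    (hQ : Q + Qᵀ = diagonal B) (hrow : ∀ i, ∑ m, Q i m = 0)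
    {S : ι → ι → R} {Ψ : ι → R}
    (hanti : ∀ i m, S i m - S m i = Ψ i - Ψ m) (hdiag : ∀ i, S i i = Ψ i) :
    ∑ i, ∑ m, Q i m * S i m = 0 := by
  have hsym : ∑ i, ∑ m, (Q + Qᵀ) i m * S i m = ∑ i, B i * Ψ i := by
    simp only [hQ, diagonal_apply, ite_mul, zero_mul, Finset.sum_ite_eq, Finset.mem_univ,
      if_true, hdiag]
  have hpot : ∑ i, ∑ m, Q m i * (Ψ i - Ψ m) = ∑ i, B i * Ψ i := by
    have hcol : ∑ i, ∑ m, Q m i * Ψ i = ∑ i, B i * Ψ i := by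
      simp only [← Finset.sum_mul, sum_col_eq_of_add_transpose_eq_diagonal hQ hrow]
    have hrow' : ∑ i, ∑ m, Q m i * Ψ m = 0 := by
      rw [Finset.sum_comm]
      simp only [← Finset.sum_mul, hrow, zero_mul, Finset.sum_const_zero]
    simp only [mul_sub, Finset.sum_sub_distrib, hcol, hrow', sub_zero]
  have htwice : ∑ i, ∑ m, Q i m * S i m + ∑ i, ∑ m, Q i m * S i m = 0 :=
    calc ∑ i, ∑ m, Q i m * S i m + ∑ i, ∑ m, Q i m * S i m
        = ∑ i, ∑ m, Q i m * S i m + ∑ i, ∑ m, Q m i * S m i := by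
          rw [Finset.sum_comm (f := fun i m => Q m i * S m i)]
      _ = ∑ i, ∑ m, (Q + Qᵀ) i m * S i m - ∑ i, ∑ m, Q m i * (Ψ i - Ψ m) := by
          simp only [← hanti, add_apply, transpose_apply, ← Finset.sum_add_distrib,
            ← Finset.sum_sub_distrib]
          congr! 2 with i _ m _
          ring
      _ = 0 := by rw [hsym, hpot, sub_self]
  exact add_self_eq_zero.mp htwice

lemma Matrix.sum_mul_dotProduct_flux_eq_zero_of_sbp {𝒮 κ : Type*} [Fintype κ]
    [NoZeroDivisors R] [CharZero R] {Q : Matrix ι ι R} {B : ι → R}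
    (hQ : Q + Qᵀ = diagonal B) (hrow : ∀ i, ∑ m, Q i m = 0)
    {W : 𝒮 → κ → R} {ψ : 𝒮 → R} {f : 𝒮 → 𝒮 → κ → R}
    (hsym : ∀ U V, f U V = f V U) (hec : ∀ U V, (W U - W V) ⬝ᵥ f U V = ψ U - ψ V)
    (hdiag : ∀ U, W U ⬝ᵥ f U U = ψ U) (V : ι → 𝒮) :
    ∑ i, ∑ m, Q i m * (W (V i) ⬝ᵥ f (V i) (V m)) = 0 :=
  sum_mul_eq_zero_of_sbp hQ hrow (fun i m => by rw [hsym (V m), ← sub_dotProduct, hec])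
    fun i => hdiag (V i)

end SBP

theorem glm_volume_terms_vanish_general
    {𝒮 : Type*} (n : ℕ)
    (W : 𝒮 → Fin n → ℝ) (Ψ : Fin 2 → 𝒮 → ℝ)
    (F : Fin 2 → 𝒮 → 𝒮 → Fin n → ℝ)
    (hsym : ∀ (d : Fin 2) (U V : 𝒮), F d U V = F d V U)
    (hec : ∀ (d : Fin 2) (U V : 𝒮),
      (∑ a, (W U a - W V a) * F d U V a) = Ψ d U - Ψ d V)
    (hdiag : ∀ (d : Fin 2) (U : 𝒮), (∑ a, W U a * F d U U a) = Ψ d U)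
    (N : ℕ)
    (ω : Fin (N+1) → ℝ)
    (D : Matrix (Fin (N+1)) (Fin (N+1)) ℝ)
    (hrows : ∀ i, (∑ m, D i m) = 0)
    (hSBP : Matrix.diagonal ω * D + (Matrix.diagonal ω * D)ᵀ
      = Matrix.diagonal (fun i => if i = 0 then (-1 : ℝ)
          else if i = Fin.last N then 1 else 0))
    (U : Fin (N+1) → Fin (N+1) → 𝒮) :
    (∑ i, ∑ j, ω i * ω j * ∑ a, W (U i j) a *
      (2 * ∑ m, D i m * F 0 (U i j) (U m j) a
        + 2 * ∑ m, D j m * F 1 (U i j) (U i m) a)) = 0 := by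
  set Q := diagonal ω * D
  have hQ_apply : ∀ i m, Q i m = ω i * D i m := fun i m => diagonal_mul ω D i m
  have hrowQ : ∀ i, ∑ m, Q i m = 0 := fun i => by
    simp only [hQ_apply, ← Finset.mul_sum, hrows, mul_zero]
  have hx : ∀ j, ∑ i, ∑ m, Q i m * (W (U i j) ⬝ᵥ F 0 (U i j) (U m j)) = 0 := fun j =>
    sum_mul_dotProduct_flux_eq_zero_of_sbp hSBP hrowQ (hsym 0) (hec 0) (hdiag 0) (U · j)
  have hy : ∀ i, ∑ j, ∑ m, Q j m * (W (U i j) ⬝ᵥ F 1 (U i j) (U i m)) = 0 := fun i =>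
    sum_mul_dotProduct_flux_eq_zero_of_sbp hSBP hrowQ (hsym 1) (hec 1) (hdiag 1) (U i)
  have hsplit : ∀ i j, ω i * ω j * ∑ a, W (U i j) a *
      (2 * ∑ m, D i m * F 0 (U i j) (U m j) a + 2 * ∑ m, D j m * F 1 (U i j) (U i m) a)
      = 2 * ω j * ∑ m, Q i m * (W (U i j) ⬝ᵥ F 0 (U i j) (U m j))
        + 2 * ω i * ∑ m, Q j m * (W (U i j) ⬝ᵥ F 1 (U i j) (U i m)) := fun i j => by
    simp only [hQ_apply, dotProduct, Finset.mul_sum, mul_add, Finset.sum_add_distrib]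
    congr 1 <;> rw [Finset.sum_comm] <;>
      exact Finset.sum_congr rfl fun _ _ => Finset.sum_congr rfl fun _ _ => by ring
  simp only [hsplit, Finset.sum_add_distrib, mul_assoc, ← Finset.mul_sum]
  rw [Finset.sum_comm]
  simp only [← Finset.mul_sum, hx, hy, mul_zero, Finset.sum_const_zero, add_zero]

/-- **Entropy contribution of GLM volume terms** (Lemma 4.1, abstract two-dimensional form).
Given symmetric two-point fluxes satisfying the entropy-conservation condition and the
diagonal contraction property, the contracted split-form volume term vanishes for any
SBP operator. -/
theorem glm_volume_terms_vanish
    {𝒮 : Type*} (n : ℕ) (hn : 1 ≤ n)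
    (W : 𝒮 → Fin n → ℝ) (Ψ : Fin 2 → 𝒮 → ℝ)
    (F : Fin 2 → 𝒮 → 𝒮 → Fin n → ℝ)
    (hsym : ∀ (d : Fin 2) (U V : 𝒮), F d U V = F d V U)
    (hec : ∀ (d : Fin 2) (U V : 𝒮),
      (∑ a, (W U a - W V a) * F d U V a) = Ψ d U - Ψ d V)
    (hdiag : ∀ (d : Fin 2) (U : 𝒮), (∑ a, W U a * F d U U a) = Ψ d U)
    (N : ℕ) (hN : 1 ≤ N)
    (ω : Fin (N+1) → ℝ) (hω : ∀ i, 0 < ω i)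
    (D : Matrix (Fin (N+1)) (Fin (N+1)) ℝ)
    (hrows : ∀ i, (∑ m, D i m) = 0)
    (hSBP : Matrix.diagonal ω * D + (Matrix.diagonal ω * D)ᵀ
      = Matrix.diagonal (fun i => if i = 0 then (-1 : ℝ)
          else if i = Fin.last N then 1 else 0))
    (U : Fin (N+1) → Fin (N+1) → 𝒮) :
    (∑ i, ∑ j, ω i * ω j * ∑ a, W (U i j) a *
      (2 * ∑ m, D i m * F 0 (U i j) (U m j) a
        + 2 * ∑ m, D j m * F 1 (U i j) (U i m) a)) = 0 :=
  glm_volume_terms_vanish_general n W Ψ F hsym hec hdiag N ω D hrows hSBP U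
end

section
/- (Entropy contribution of total volume terms, Corollary 4.3, abstract two-dimensional form.) Let 𝒮 be a set of states, n ≥ 1, W : 𝒮 → ℝⁿ, and Φ, b₁, b₂, fS₁, fS₂, Ψ₁, Ψ₂ : 𝒮 → ℝ. For d = 1, 2 let F_d : 𝒮 × 𝒮 → ℝⁿ be symmetric two-point fluxes satisfying, for all U, V ∈ 𝒮: (W(U) − W(V))ᵀ F_d(U, V) = Ψ_d(U) − Ψ_d(V) − ½(b_d(U) + b_d(V))(Φ(U) − Φ(V)), and the diagonal contraction property W(U)ᵀ F_d(U, U) = Ψ_d(U) + fS_d(U) − Φ(U) b_d(U). Then for any SBP operator (ω, D, Q) and any nodal states U_{ij} ∈ 𝒮 (0 ≤ i, j ≤ N): Σ_{i,j} ω_i ω_j W(U_{ij})ᵀ [ 2 Σ_m D_{im} F₁(U_{ij}, U_{mj}) + 2 Σ_m D_{jm} F₂(U_{ij}, U_{im}) ] + Σ_{i,j} ω_i ω_j Φ(U_{ij}) [ Σ_m D_{im} b₁(U_{mj}) + Σ_m D_{jm} b₂(U_{im}) ] = Σ_{j=0}^{N} ω_j ( fS₁(U_{Nj}) − fS₁(U_{0j})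 ) + Σ_{i=0}^{N} ω_i ( fS₂(U_{iN}) − fS₂(U_{i0}) ). -/
/-! With `Q = diag(ω) D`, each one-dimensional line contributes `∑ᵢ ∑ₘ Qᵢₘ hᵢₘ` where
`hᵢₘ = 2 Wᵢ ⬝ F(Uᵢ, Uₘ) + Φᵢ bₘ`. By symmetry of `F` and entropy conservation, the
antisymmetric part of `h` is a difference `gᵢ - gₘ` with `g = 2Ψ - Φ b`. The `gᵢ` part is
killed by the zero row sums of `Q`, and `hᵢₘ - gᵢ` is symmetric, so `Q + Qᵀ = 𝔹` collapses its
sum to half the boundary values of `hᵢᵢ - gᵢ`, which the diagonal contraction identifies with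
`2 fS`. The two-dimensional sum is a tensor product of such line sums. -/

open Matrix Finset

section SBP

variable {ι : Type*} [Fintype ι] [DecidableEq ι] {Q : Matrix ι ι ℝ} {β : ι → ℝ}

theorem sbp_sum_sum_mul_of_symm (hQ : Q + Qᵀ = diagonal β) {k : ι → ι → ℝ}
    (hk : ∀ i m, k i m = k m i) :
    ∑ i, ∑ m, Q i m * k i m = (∑ i, β i * k i i) / 2 := by
  have hswap : ∑ i, ∑ m, Q m i * k i m = ∑ i, ∑ m, Q i m * k i m := by
    rw [sum_comm]; simp only [hk]
  have hentry : ∀ i m, Q i m + Q m i = diagonal β i m := fun i m => by rw [← hQ]; rfl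
  have hB : ∑ i, ∑ m, (Q i m + Q m i) * k i m = ∑ i, β i * k i i := by
    simp [hentry, diagonal_apply]
  simp only [add_mul, sum_add_distrib, hswap] at hB
  linarith

theorem sbp_sum_sum_mul_of_sub_swap (hQ : Q + Qᵀ = diagonal β) (hrows : ∀ i, ∑ m, Q i m = 0)
    {h : ι → ι → ℝ} {g : ι → ℝ} (hhg : ∀ i m, h i m - h m i = g i - g m) :
    ∑ i, ∑ m, Q i m * h i m = (∑ i, β i * (h i i - g i)) / 2 := by
  have hrow_g : ∑ i, ∑ m, Q i m * g i = 0 := by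
    simp [← sum_mul, hrows]
  rw [← sbp_sum_sum_mul_of_symm hQ (k := fun i m => h i m - g i) (fun i m => by linarith [hhg i m])]
  simp only [mul_sub, sum_sub_distrib, hrow_g, sub_zero]

end SBP

def sbpBoundary (N : ℕ) (i : Fin (N+1)) : ℝ :=
  if i = 0 then -1 else if i = Fin.last N then 1 else 0

theorem sum_sbpBoundary_mul {N : ℕ} (hN : 1 ≤ N) (f : Fin (N+1) → ℝ) :
    ∑ i, sbpBoundary N i * f i = f (Fin.last N) - f 0 := by
  have h0 : (0 : Fin (N+1)) ≠ Fin.last N := by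
    simp [Fin.ext_iff]; omega
  simp [sbpBoundary, ite_mul, sum_ite, filter_ne', filter_eq', h0.symm]
  ring

section EntropyConservative

variable {𝒮 : Type*} {n : ℕ} {W : 𝒮 → Fin n → ℝ} {F : 𝒮 → 𝒮 → Fin n → ℝ}
  {Φ b fS Ψ : 𝒮 → ℝ}

theorem two_point_sub_swap (hsym : ∀ U V, F U V = F V U)
    (hec : ∀ U V, (W U - W V) ⬝ᵥ F U V = Ψ U - Ψ V - (1/2) * (b U + b V) * (Φ U - Φ V))
    (U V : 𝒮) :
    (2 * (W U ⬝ᵥ F U V) + Φ U * b V) - (2 * (W V ⬝ᵥ F V U) + Φ V * b U)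
      = (2 * Ψ U - Φ U * b U) - (2 * Ψ V - Φ V * b V) := by
  rw [hsym V U]
  linear_combination 2 * (sub_dotProduct _ _ _).symm.trans (hec U V)

theorem sum_volume_term_eq_boundary (hsym : ∀ U V, F U V = F V U)
    (hec : ∀ U V, (W U - W V) ⬝ᵥ F U V = Ψ U - Ψ V - (1/2) * (b U + b V) * (Φ U - Φ V))
    (hdiag : ∀ U, W U ⬝ᵥ F U U = Ψ U + fS U - Φ U * b U)
    {N : ℕ} (hN : 1 ≤ N) {ω : Fin (N+1) → ℝ} {D : Matrix (Fin (N+1)) (Fin (N+1)) ℝ}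
    (hrows : ∀ i, ∑ m, D i m = 0)
    (hSBP : diagonal ω * D + (diagonal ω * D)ᵀ = diagonal (sbpBoundary N))
    (u : Fin (N+1) → 𝒮) :
    ∑ i, ω i * (∑ a, W (u i) a * (2 * ∑ m, D i m * F (u i) (u m) a)
      + Φ (u i) * ∑ m, D i m * b (u m)) = fS (u (Fin.last N)) - fS (u 0) := by
  have hQrows : ∀ i, ∑ m, (diagonal ω * D) i m = 0 := fun i => by
    simp [diagonal_mul, ← mul_sum, hrows]
  have hsplit : ∑ i, ω i * (∑ a, W (u i) a * (2 * ∑ m, D i m * F (u i) (u m) a)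
      + Φ (u i) * ∑ m, D i m * b (u m))
      = ∑ i, ∑ m, (diagonal ω * D) i m
          * (2 * (W (u i) ⬝ᵥ F (u i) (u m)) + Φ (u i) * b (u m)) := by
    simp only [diagonal_mul, dotProduct, mul_sum, mul_add, sum_add_distrib]
    congr 1
    · refine sum_congr rfl fun i _ => ?_
      rw [sum_comm]
      exact sum_congr rfl fun m _ => sum_congr rfl fun a _ => by ring
    · exact sum_congr rfl fun i _ => sum_congr rfl fun m _ => by ring
  rw [hsplit, sbp_sum_sum_mul_of_sub_swap hSBP hQrows
    (fun i m => two_point_sub_swap hsym hec (u i) (u m))]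
  have hdiag_sub : ∀ U, 2 * (W U ⬝ᵥ F U U) + Φ U * b U - (2 * Ψ U - Φ U * b U) = 2 * fS U :=
    fun U => by rw [hdiag]; ring
  simp only [hdiag_sub]
  rw [sum_sbpBoundary_mul hN (fun i => 2 * fS (u i))]
  ring

end EntropyConservative

theorem sum_sum_mul_mul_add {ι : Type*} [Fintype ι] (ω : ι → ℝ) (X Y : ι → ι → ℝ) :
    ∑ i, ∑ j, ω i * ω j * (X i j + Y i j)
      = ∑ j, ω j * ∑ i, ω i * X i j + ∑ i, ω i * ∑ j, ω j * Y i j := by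
  simp only [mul_add, sum_add_distrib, mul_sum]
  rw [sum_comm (f := fun i j => ω i * ω j * X i j)]
  congr 1 <;> exact sum_congr rfl fun _ _ => sum_congr rfl fun _ _ => by ring

theorem total_volume_terms_boundary_general
    {𝒮 : Type*} (n : ℕ)
    (W : 𝒮 → Fin n → ℝ) (Φ : 𝒮 → ℝ)
    (b fS Ψ : Fin 2 → 𝒮 → ℝ)
    (F : Fin 2 → 𝒮 → 𝒮 → Fin n → ℝ)
    (hsym : ∀ (d : Fin 2) (U V : 𝒮), F d U V = F d V U)
    (hec : ∀ (d : Fin 2) (U V : 𝒮),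
      (∑ a, (W U a - W V a) * F d U V a)
        = Ψ d U - Ψ d V - (1/2) * (b d U + b d V) * (Φ U - Φ V))
    (hdiag : ∀ (d : Fin 2) (U : 𝒮),
      (∑ a, W U a * F d U U a) = Ψ d U + fS d U - Φ U * b d U)
    (N : ℕ) (hN : 1 ≤ N)
    (ω : Fin (N+1) → ℝ)
    (D : Matrix (Fin (N+1)) (Fin (N+1)) ℝ)
    (hrows : ∀ i, (∑ m, D i m) = 0)
    (hSBP : Matrix.diagonal ω * D + (Matrix.diagonal ω * D)ᵀ
      = Matrix.diagonal (fun i => if i = 0 then (-1 : ℝ)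
          else if i = Fin.last N then 1 else 0))
    (U : Fin (N+1) → Fin (N+1) → 𝒮) :
    (∑ i, ∑ j, ω i * ω j * ∑ a, W (U i j) a *
      (2 * ∑ m, D i m * F 0 (U i j) (U m j) a
        + 2 * ∑ m, D j m * F 1 (U i j) (U i m) a))
    + (∑ i, ∑ j, ω i * ω j * Φ (U i j) *
        ((∑ m, D i m * b 0 (U m j)) + ∑ m, D j m * b 1 (U i m)))
    = (∑ j, ω j * (fS 0 (U (Fin.last N) j) - fS 0 (U 0 j)))
      + ∑ i, ω i * (fS 1 (U i (Fin.last N)) - fS 1 (U i 0)) := by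
  have hx := fun j => sum_volume_term_eq_boundary (hsym 0) (hec 0) (hdiag 0) hN hrows hSBP
    (fun i => U i j)
  have hy := fun i => sum_volume_term_eq_boundary (hsym 1) (hec 1) (hdiag 1) hN hrows hSBP (U i)
  calc _ = ∑ i, ∑ j, ω i * ω j *
        ((∑ a, W (U i j) a * (2 * ∑ m, D i m * F 0 (U i j) (U m j) a)
          + Φ (U i j) * ∑ m, D i m * b 0 (U m j))
        + (∑ a, W (U i j) a * (2 * ∑ m, D j m * F 1 (U i j) (U i m) a)
          + Φ (U i j) * ∑ m, D j m * b 1 (U i m))) := by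
        rw [← sum_add_distrib]
        refine sum_congr rfl fun i _ => ?_
        rw [← sum_add_distrib]
        refine sum_congr rfl fun j _ => ?_
        simp only [mul_add, sum_add_distrib]
        ring
    _ = _ := by simp only [sum_sum_mul_mul_add, hx, hy]

/-- **Entropy contribution of total volume terms** (Corollary 4.3, abstract
two-dimensional form).  The contracted advective plus nonconservative volume
contributions reduce exactly to the boundary quadrature of the entropy flux. -/
theorem total_volume_terms_boundary
    {𝒮 : Type*} (n : ℕ) (hn : 1 ≤ n)
    (W : 𝒮 → Fin n → ℝ) (Φ : 𝒮 → ℝ)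
    (b fS Ψ : Fin 2 → 𝒮 → ℝ)
    (F : Fin 2 → 𝒮 → 𝒮 → Fin n → ℝ)
    (hsym : ∀ (d : Fin 2) (U V : 𝒮), F d U V = F d V U)
    (hec : ∀ (d : Fin 2) (U V : 𝒮),
      (∑ a, (W U a - W V a) * F d U V a)
        = Ψ d U - Ψ d V - (1/2) * (b d U + b d V) * (Φ U - Φ V))
    (hdiag : ∀ (d : Fin 2) (U : 𝒮),
      (∑ a, W U a * F d U U a) = Ψ d U + fS d U - Φ U * b d U)
    (N : ℕ) (hN : 1 ≤ N)
    (ω : Fin (N+1) → ℝ) (hω : ∀ i, 0 < ω i)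
    (D : Matrix (Fin (N+1)) (Fin (N+1)) ℝ)
    (hrows : ∀ i, (∑ m, D i m) = 0)
    (hSBP : Matrix.diagonal ω * D + (Matrix.diagonal ω * D)ᵀ
      = Matrix.diagonal (fun i => if i = 0 then (-1 : ℝ)
          else if i = Fin.last N then 1 else 0))
    (U : Fin (N+1) → Fin (N+1) → 𝒮) :
    (∑ i, ∑ j, ω i * ω j * ∑ a, W (U i j) a *
      (2 * ∑ m, D i m * F 0 (U i j) (U m j) a
        + 2 * ∑ m, D j m * F 1 (U i j) (U i m) a))
    + (∑ i, ∑ j, ω i * ω j * Φ (U i j) *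
        ((∑ m, D i m * b 0 (U m j)) + ∑ m, D j m * b 1 (U i m)))
    = (∑ j, ω j * (fS 0 (U (Fin.last N) j) - fS 0 (U 0 j)))
      + ∑ i, ω i * (fS 1 (U i (Fin.last N)) - fS 1 (U i 0)) :=
  total_volume_terms_boundary_general n W Φ b fS Ψ F hsym hec hdiag N hN ω D hrows hSBP U
end

section
/- (Cancellation of ideal-MHD and nonconservative volume terms, equation (4.17) / Appendix B, abstract two-dimensional form.) Let 𝒮 be a set of states, n ≥ 1, W : 𝒮 → ℝⁿ, and Φ, b₁, b₂, Ψ₁, Ψ₂ : 𝒮 → ℝ. For d = 1, 2 let F_d : 𝒮 × 𝒮 → ℝⁿ be symmetric two-point fluxes satisfying, for all U, V ∈ 𝒮: (W(U) − W(V))ᵀ F_d(U, V) = Ψ_d(U) − Ψ_d(V) − ½(b_d(U) + b_d(V))(Φ(U) − Φ(V)), and the diagonal contraction property W(U)ᵀ F_d(U, U) = Ψ_d(U) − Φ(U) b_d(U). Then for any SBP operator (ω, D, Q) and any nodal states U_{ij} ∈ 𝒮 (0 ≤ i, j ≤ N): Σ_{i,j} ω_i ω_j W(U_{ij})ᵀ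 [ 2 Σ_m D_{im} F₁(U_{ij}, U_{mj}) + 2 Σ_m D_{jm} F₂(U_{ij}, U_{im}) ] + Σ_{i,j} ω_i ω_j Φ(U_{ij}) [ Σ_m D_{im} b₁(U_{mj}) + Σ_m D_{jm} b₂(U_{im}) ] = 0. -/
/-!
Along a grid line put Q = diag(ω) D. The two flux conditions say exactly that
2 W(U)ᵀF(U,V) + Φ(U) b(V) = g(U) + A(U,V) with g = 2Ψ - Φ b and A symmetric with zero diagonal.
Tested against g(U_i) the line sum vanishes because the rows of D sum to zero; tested against A
it vanishes because Q + Qᵀ is diagonal. The two-dimensional sum is a weighted sum of such line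
sums in each direction.
-/

open Matrix

section SBP

variable {ι : Type*} [Fintype ι] {Q : Matrix ι ι ℝ}

theorem Matrix.IsDiag.sum_mul_eq_zero_of_symm (hQ : (Q + Qᵀ).IsDiag)
    {A : ι → ι → ℝ} (hA : ∀ i m, A i m = A m i) (hA₀ : ∀ i, A i i = 0) :
    ∑ i, ∑ m, Q i m * A i m = 0 := by
  have hterm : ∀ i m, (Q i m + Q m i) * A i m = 0 := by
    intro i m
    rcases eq_or_ne i m with rfl | hne
    · rw [hA₀, mul_zero]
    · rw [show Q i m + Q m i = 0 from hQ hne, zero_mul]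
  have hswap : ∑ i, ∑ m, Q m i * A i m = ∑ i, ∑ m, Q i m * A i m := by
    rw [Finset.sum_comm]
    simp only [hA]
  have : 2 * ∑ i, ∑ m, Q i m * A i m = 0 := by
    calc 2 * ∑ i, ∑ m, Q i m * A i m
        = ∑ i, ∑ m, (Q i m + Q m i) * A i m := by
          simp only [add_mul, Finset.sum_add_distrib, hswap]; ring
      _ = 0 := by simp only [hterm, Finset.sum_const_zero]
  linarith

theorem Matrix.IsDiag.sum_mul_add_eq_zero (hQ : (Q + Qᵀ).IsDiag)
    (hrow : ∀ i, ∑ m, Q i m = 0) (g : ι → ℝ)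
    {A : ι → ι → ℝ} (hA : ∀ i m, A i m = A m i) (hA₀ : ∀ i, A i i = 0) :
    ∑ i, ∑ m, Q i m * (g i + A i m) = 0 := by
  have hg : ∑ i, ∑ m, Q i m * g i = 0 := by
    simp only [← Finset.sum_mul, hrow, zero_mul, Finset.sum_const_zero]
  simp only [mul_add, Finset.sum_add_distrib, hg, hQ.sum_mul_eq_zero_of_symm hA hA₀, add_zero]

variable {𝒮 : Type*} {n : ℕ} (W : 𝒮 → Fin n → ℝ) (Φ b Ψ : 𝒮 → ℝ) (F : 𝒮 → 𝒮 → Fin n → ℝ)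

theorem sum_mul_entropyFlux_add_nonconservative_eq_zero (hQ : (Q + Qᵀ).IsDiag)
    (hrow : ∀ i, ∑ m, Q i m = 0) (hsym : ∀ U V, F U V = F V U)
    (hec : ∀ U V, (W U - W V) ⬝ᵥ F U V = Ψ U - Ψ V - (1/2) * (b U + b V) * (Φ U - Φ V))
    (hdiag : ∀ U, W U ⬝ᵥ F U U = Ψ U - Φ U * b U) (u : ι → 𝒮) :
    ∑ i, ∑ m, Q i m * (2 * W (u i) ⬝ᵥ F (u i) (u m) + Φ (u i) * b (u m)) = 0 := by
  let g U := 2 * Ψ U - Φ U * b U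
  let A U V := 2 * W U ⬝ᵥ F U V + Φ U * b V - g U
  have hA : ∀ U V, A U V = A V U := by
    intro U V
    have := hec U V
    rw [sub_dotProduct] at this
    simp only [A, g, hsym V U]
    linear_combination 2 * this
  have hA₀ : ∀ U, A U U = 0 := by
    intro U
    simp only [A, g, hdiag]
    ring
  simpa only [A, add_sub_cancel] using hQ.sum_mul_add_eq_zero hrow (fun i => g (u i))
    (A := fun i m => A (u i) (u m)) (fun i m => hA _ _) (fun i => hA₀ _)

end SBP

theorem mhd_nonconservative_volume_cancel_general
    {𝒮 : Type*} (n : ℕ)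
    (W : 𝒮 → Fin n → ℝ) (Φ : 𝒮 → ℝ)
    (b Ψ : Fin 2 → 𝒮 → ℝ)
    (F : Fin 2 → 𝒮 → 𝒮 → Fin n → ℝ)
    (hsym : ∀ (d : Fin 2) (U V : 𝒮), F d U V = F d V U)
    (hec : ∀ (d : Fin 2) (U V : 𝒮),
      (∑ a, (W U a - W V a) * F d U V a)
        = Ψ d U - Ψ d V - (1/2) * (b d U + b d V) * (Φ U - Φ V))
    (hdiag : ∀ (d : Fin 2) (U : 𝒮),
      (∑ a, W U a * F d U U a) = Ψ d U - Φ U * b d U)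
    (N : ℕ)
    (ω : Fin (N+1) → ℝ)
    (D : Matrix (Fin (N+1)) (Fin (N+1)) ℝ)
    (hrows : ∀ i, (∑ m, D i m) = 0)
    (hSBP : Matrix.diagonal ω * D + (Matrix.diagonal ω * D)ᵀ
      = Matrix.diagonal (fun i => if i = 0 then (-1 : ℝ)
          else if i = Fin.last N then 1 else 0))
    (U : Fin (N+1) → Fin (N+1) → 𝒮) :
    (∑ i, ∑ j, ω i * ω j * ∑ a, W (U i j) a *
      (2 * ∑ m, D i m * F 0 (U i j) (U m j) a
        + 2 * ∑ m, D j m * F 1 (U i j) (U i m) a))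
    + (∑ i, ∑ j, ω i * ω j * Φ (U i j) *
        ((∑ m, D i m * b 0 (U m j)) + ∑ m, D j m * b 1 (U i m)))
    = 0 := by
  have hQ : (diagonal ω * D + (diagonal ω * D)ᵀ).IsDiag := hSBP ▸ isDiag_diagonal _
  have hrowQ : ∀ i, ∑ m, (diagonal ω * D) i m = 0 := by
    simp [diagonal_mul, ← Finset.mul_sum, hrows]
  have hline (d : Fin 2) (u : Fin (N+1) → 𝒮) :
      ∑ i, ∑ m, ω i * D i m * (2 * W (u i) ⬝ᵥ F d (u i) (u m) + Φ (u i) * b d (u m)) = 0 := by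
    simpa only [diagonal_mul] using sum_mul_entropyFlux_add_nonconservative_eq_zero W Φ (b d) (Ψ d)
      (F d) hQ hrowQ (hsym d) (hec d) (hdiag d) u
  calc _ = ∑ i, ∑ j, (ω j * ∑ m, ω i * D i m * (2 * W (U i j) ⬝ᵥ F 0 (U i j) (U m j)
            + Φ (U i j) * b 0 (U m j))
          + ω i * ∑ m, ω j * D j m * (2 * W (U i j) ⬝ᵥ F 1 (U i j) (U i m)
            + Φ (U i j) * b 1 (U i m))) := by
        simp only [← Finset.sum_add_distrib]
        refine Finset.sum_congr rfl fun i _ => Finset.sum_congr rfl fun j _ => ?_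
        simp only [dotProduct, Finset.mul_sum, mul_add, Finset.sum_add_distrib]
        rw [Finset.sum_comm (γ := Fin n), Finset.sum_comm (γ := Fin n)]
        ring_nf
        ac_rfl
    _ = ∑ j, ω j * ∑ i, ∑ m, ω i * D i m * (2 * W (U i j) ⬝ᵥ F 0 (U i j) (U m j)
            + Φ (U i j) * b 0 (U m j))
        + ∑ i, ω i * ∑ j, ∑ m, ω j * D j m * (2 * W (U i j) ⬝ᵥ F 1 (U i j) (U i m)
            + Φ (U i j) * b 1 (U i m)) := by
        simp only [Finset.sum_add_distrib, Finset.mul_sum]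
        congr 1
        exact Finset.sum_comm
    _ = 0 := by simp [hline]

/-- **Cancellation of ideal-MHD and nonconservative volume terms**
(equation (4.17) / Appendix B, abstract two-dimensional form).  In entropy
space the ideal-MHD volume flux contributions cancel exactly against the
nonconservative volume terms. -/
theorem mhd_nonconservative_volume_cancel
    {𝒮 : Type*} (n : ℕ) (hn : 1 ≤ n)
    (W : 𝒮 → Fin n → ℝ) (Φ : 𝒮 → ℝ)
    (b Ψ : Fin 2 → 𝒮 → ℝ)
    (F : Fin 2 → 𝒮 → 𝒮 → Fin n → ℝ)
    (hsym : ∀ (d : Fin 2) (U V : 𝒮), F d U V = F d V U)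
    (hec : ∀ (d : Fin 2) (U V : 𝒮),
      (∑ a, (W U a - W V a) * F d U V a)
        = Ψ d U - Ψ d V - (1/2) * (b d U + b d V) * (Φ U - Φ V))
    (hdiag : ∀ (d : Fin 2) (U : 𝒮),
      (∑ a, W U a * F d U U a) = Ψ d U - Φ U * b d U)
    (N : ℕ) (hN : 1 ≤ N)
    (ω : Fin (N+1) → ℝ) (hω : ∀ i, 0 < ω i)
    (D : Matrix (Fin (N+1)) (Fin (N+1)) ℝ)
    (hrows : ∀ i, (∑ m, D i m) = 0)
    (hSBP : Matrix.diagonal ω * D + (Matrix.diagonal ω * D)ᵀ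
      = Matrix.diagonal (fun i => if i = 0 then (-1 : ℝ)
          else if i = Fin.last N then 1 else 0))
    (U : Fin (N+1) → Fin (N+1) → 𝒮) :
    (∑ i, ∑ j, ω i * ω j * ∑ a, W (U i j) a *
      (2 * ∑ m, D i m * F 0 (U i j) (U m j) a
        + 2 * ∑ m, D j m * F 1 (U i j) (U i m) a))
    + (∑ i, ∑ j, ω i * ω j * Φ (U i j) *
        ((∑ m, D i m * b 0 (U m j)) + ∑ m, D j m * b 1 (U i m)))
    = 0 :=
  mhd_nonconservative_volume_cancel_general n W Φ b Ψ F hsym hec hdiag N ω D hrows hSBP U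
end
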